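/- arXiv:1811.05444 — 2 statements merged into one kernel-verified Lean document; each statement's English description precedes it below -/
import Mathlib

section
/- Suppose k ≥ 2. Let u* be a (k−2)-element set disjoint from ω × 2, let I = (ω × 2) ∪ u*, and let S = { u* ∪ {(j,0),(j,1)} : j < ω } ⊆ [I]^k. Then S is (k+1)-clique-free and Δ(IP) is an instance of Δ_{k+1,k}(S)^{k−1}. Consequently, for every n > k ≥ 2 there exist an index set I, an n-clique-free S ⊆ [I]^k, and i* < ω such that Δ(IP) is an instance of Δ_{n,k}(S)^{i*}. -/
universe x y

/-- Δ' on J is an instance of Δ on I. -/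
def IsInstanceOf {J : Type*} {I : Type*} (Δ' : Set (Finset J)) (Δ : Set (Finset I)) : Prop :=
  ∀ s : Finset J, ∃ f : J → I, ∀ t ⊆ s,
    (t ∈ Δ' ↔ (letI := Classical.decEq I; t.image f) ∈ Δ)

/-- Δ^m : the pattern on [I]^{≤m} consisting of finite s with ⋃ s ∈ Δ. -/
def patternPow {I : Type x} (Δ : Set (Finset I)) (m : ℕ) :
    Set (Finset {u : Finset I // u.card ≤ m}) :=
  letI := Classical.decEq I
  {s | s.sup (fun u => u.1) ∈ Δ}

/-- The pattern Δ_{n,k}(S) on [I]^{k-1}: finite sets s of (k-1)-element subsets of I such that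
there is no (n-1)-element v ⊆ I with all (k-1)-element subsets of v in s and all k-element
subsets of v in S. -/
def deltaNK {I : Type x} (n k : ℕ) (S : Set (Finset I)) :
    Set (Finset {u : Finset I // u.card = k - 1}) :=
  {s | ¬ ∃ v : Finset I, v.card = n - 1 ∧
      (∀ (u : Finset I) (hu : u.card = k - 1), u ⊆ v →
        (⟨u, hu⟩ : {u : Finset I // u.card = k - 1}) ∈ s) ∧
      (∀ w : Finset I, w ⊆ v → w.card = k → w ∈ S)}

/-- S ⊆ [I]^k is n-clique-free: no n-element w ⊆ I has all its k-element subsets in S. -/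
def CliqueFreeSet {I : Type x} (n k : ℕ) (S : Set (Finset I)) : Prop :=
  ¬ ∃ w : Finset I, w.card = n ∧ ∀ v : Finset I, v ⊆ w → v.card = k → v ∈ S

/-- The pattern Δ(IP) on ω × 2: finite sets containing no pair (j,0), (j,1). -/
def deltaIP : Set (Finset (ℕ × Fin 2)) :=
  {s | ∀ j : ℕ, ¬((j, 0) ∈ s ∧ (j, 1) ∈ s)}

/-- The k-uniform hypergraph S = { u* ∪ {(j,0),(j,1)} : j < ω } on I = (ω × 2) ⊕ u*, where
u* is a (k−2)-element set disjoint from ω × 2. -/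
def ipHyper (k : ℕ) : Set (Finset ((ℕ × Fin 2) ⊕ Fin (k - 2))) :=
  {w | ∃ j : ℕ, w = (Finset.univ.image Sum.inr) ∪ {Sum.inl (j, 0), Sum.inl (j, 1)}}

/-! Replace `u*` by any set `U` of size `n - 3` and take as hyperedges the `k`-subsets of the
blocks `B j = U ∪ {(j,0), (j,1)}`, which have size `n - 1` (for `n = k + 1` the hyperedges are the
blocks themselves). If every `k`-subset of a set `v` with `|v| ≥ k` is a hyperedge, then `v` lies
in a single block, because `k ≥ 2` puts any two points of `v` outside `U` into a common hyperedge.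
Hence there is no `n`-clique, and the `(n - 1)`-sets `v` in the definition of `Δ_{n,k}(S)` are
exactly the blocks. Send `(j, ε)` to the set of `(k - 1)`-subsets of `B j` that contain `(j,1)` iff
`ε = 1`. A union of such sets contains every `(k - 1)`-subset of `B j` iff it uses both `(j,0)`
and `(j,1)`: for the converse, look at the sets `D ∪ {(j,ε)}` with `D ⊆ U`. The two kinds of sets
have `C(n-2, k-1)` and `C(n-2, k-2)` elements, which for `n = k + 1` is at most `k - 1`. -/

open Finset

section PairBlocks

variable {I : Type*} [DecidableEq I]

def pairBlock (ι : ℕ × Fin 2 → I) (U : Finset I) (j : ℕ) : Finset I :=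
  U ∪ {ι (j, 0), ι (j, 1)}

def pairBlockHypergraph (ι : ℕ × Fin 2 → I) (U : Finset I) (k : ℕ) : Set (Finset I) :=
  {w | ∃ j, w ⊆ pairBlock ι U j ∧ w.card = k}

def pairBlockSide (ι : ℕ × Fin 2 → I) (U : Finset I) (k j : ℕ) (ε : Fin 2) :
    Finset (Finset I) :=
  (powersetCard (k - 1) (pairBlock ι U j)).filter (fun u => ι (j, 1) ∈ u ↔ ε = 1)

variable {ι : ℕ × Fin 2 → I} {U : Finset I} {k n j : ℕ}

theorem mem_pairBlock {x : I} : x ∈ pairBlock ι U j ↔ x ∈ U ∨ x = ι (j, 0) ∨ x = ι (j, 1) := by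
  simp only [pairBlock, mem_union, mem_insert, mem_singleton]

theorem apply_mem_pairBlock (ε : Fin 2) : ι (j, ε) ∈ pairBlock ι U j := by
  obtain rfl | rfl : ε = 0 ∨ ε = 1 := by omega
  all_goals simp [mem_pairBlock]

theorem card_pairBlock_le : (pairBlock ι U j).card ≤ U.card + 2 :=
  (card_union_le _ _).trans (Nat.add_le_add_left card_le_two _)

theorem card_pairBlock (hι : ι.Injective) (hU : ∀ p, ι p ∉ U) :
    (pairBlock ι U j).card = U.card + 2 := by
  have hne : ι (j, 0) ≠ ι (j, 1) := hι.ne (by simp)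
  rw [pairBlock, card_union_of_disjoint, card_pair hne]
  simp [disjoint_right, hU]

theorem card_of_mem_pairBlockHypergraph {w : Finset I} (hw : w ∈ pairBlockHypergraph ι U k) :
    w.card = k :=
  hw.choose_spec.2

theorem pairBlockHypergraph_eq_range (hι : ι.Injective) (hU : ∀ p, ι p ∉ U) :
    pairBlockHypergraph ι U (U.card + 2) = Set.range (pairBlock ι U) := by
  ext w
  constructor
  · rintro ⟨j, hwj, hw⟩
    exact ⟨j, (eq_of_subset_of_card_le hwj (by rw [hw, card_pairBlock hι hU])).symm⟩
  · rintro ⟨j, rfl⟩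
    exact ⟨j, subset_rfl, card_pairBlock hι hU⟩

theorem eq_of_mem_pairBlock (hι : ι.Injective) {a : I} {j' : ℕ} (ha : a ∉ U)
    (h : a ∈ pairBlock ι U j) (h' : a ∈ pairBlock ι U j') : j = j' := by
  simp only [mem_pairBlock, ha, false_or] at h h'
  rcases h with rfl | rfl <;> rcases h' with h' | h' <;> exact congrArg Prod.fst (hι h')

theorem exists_subset_pairBlock (hι : ι.Injective) (hk : 2 ≤ k) {v : Finset I}
    (hkv : k ≤ v.card) (hS : ∀ w ⊆ v, w.card = k → w ∈ pairBlockHypergraph ι U k) :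
    ∃ j, v ⊆ pairBlock ι U j := by
  by_cases hvU : v ⊆ U
  · exact ⟨0, hvU.trans subset_union_left⟩
  obtain ⟨a, hav, haU⟩ := not_subset.mp hvU
  have common : ∀ x ∈ v, ∃ j, a ∈ pairBlock ι U j ∧ x ∈ pairBlock ι U j := by
    intro x hx
    obtain ⟨w, haxw, hwv, hwk⟩ := exists_subsuperset_card_eq
      (insert_subset hav (singleton_subset_iff.mpr hx)) (card_le_two.trans hk) hkv
    obtain ⟨j, hwj, -⟩ := hS w hwv hwk
    exact ⟨j, hwj (haxw (mem_insert_self _ _)), hwj (haxw (by simp))⟩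
  obtain ⟨j, haj, -⟩ := common a hav
  refine ⟨j, fun x hx => ?_⟩
  obtain ⟨j', haj', hxj'⟩ := common x hx
  rwa [eq_of_mem_pairBlock hι haU haj haj']

theorem cliqueFreeSet_pairBlockHypergraph (hι : ι.Injective) (hUn : U.card + 2 < n) (hk : 2 ≤ k)
    (hkn : k ≤ n) : CliqueFreeSet n k (pairBlockHypergraph ι U k) := by
  rintro ⟨w, hwn, hS⟩
  obtain ⟨j, hwj⟩ := exists_subset_pairBlock hι hk (by omega) hS
  have := (card_le_card hwj).trans card_pairBlock_le
  omega

theorem card_pairBlockSide_le (hk : 2 ≤ k) (ε : Fin 2) :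
    (pairBlockSide ι U k j ε).card ≤
      max ((U.card + 1).choose (k - 1)) ((U.card + 1).choose (k - 2)) := by
  have hmem := apply_mem_pairBlock (ι := ι) (U := U) (j := j) 1
  have hcard : (pairBlock ι U j).card - 1 ≤ U.card + 1 := by
    have := card_pairBlock_le (ι := ι) (U := U) (j := j); omega
  obtain rfl | rfl : ε = 0 ∨ ε = 1 := by omega
  · refine le_max_of_le_left ?_
    calc (pairBlockSide ι U k j 0).card
        ≤ (powersetCard (k - 1) ((pairBlock ι U j).erase (ι (j, 1)))).card := by
          refine card_le_card fun u hu => ?_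
          simp only [pairBlockSide, mem_filter, mem_powersetCard] at hu ⊢
          exact ⟨subset_erase.mpr ⟨hu.1.1, by simpa using hu.2⟩, hu.1.2⟩
      _ ≤ (U.card + 1).choose (k - 1) := by
          rw [card_powersetCard, card_erase_of_mem hmem]
          exact Nat.choose_le_choose _ hcard
  · refine le_max_of_le_right ?_
    have hside : pairBlockSide ι U k j 1 =
        (powersetCard (k - 1) (pairBlock ι U j)).filter ({ι (j, 1)} ⊆ ·) := by
      simp [pairBlockSide]
    rw [hside, card_filter_powersetCard_subset _ _ _ (singleton_subset_iff.mpr hmem)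
      (by simp only [card_singleton]; omega), card_singleton]
    exact Nat.choose_le_choose _ hcard

theorem eq_of_insert_mem_pairBlockSide (hι : ι.Injective) (hU : ∀ p, ι p ∉ U) {D : Finset I}
    (hD : D ⊆ U) {ε ε' : Fin 2} {j' : ℕ} (h : insert (ι (j, ε)) D ∈ pairBlockSide ι U k j' ε') :
    (j', ε') = (j, ε) := by
  simp only [pairBlockSide, mem_filter, mem_powersetCard] at h
  obtain ⟨⟨hsub, -⟩, hside⟩ := h
  obtain rfl : j' = j := eq_of_mem_pairBlock hι (hU _) (hsub (mem_insert_self _ _))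
    (apply_mem_pairBlock ε)
  have hD1 : ι (j', 1) ∉ D := fun h => hU _ (hD h)
  simp only [mem_insert, hD1, or_false, hι.eq_iff, Prod.mk.injEq, true_and] at hside
  exact Prod.ext rfl (show ε' = ε by omega)

theorem exists_pair_mem_of_forall_mem_pairBlockSide (hι : ι.Injective) (hU : ∀ p, ι p ∉ U)
    (hk : 2 ≤ k) (hkU : k ≤ U.card + 2) {t : Finset (ℕ × Fin 2)} {v : Finset I}
    (hv : v.card = U.card + 2)
    (hcov : ∀ u ⊆ v, u.card = k - 1 → ∃ p ∈ t, u ∈ pairBlockSide ι U k p.1 p.2)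
    (hS : ∀ w ⊆ v, w.card = k → w ∈ pairBlockHypergraph ι U k) :
    ∃ j, (j, 0) ∈ t ∧ (j, 1) ∈ t := by
  obtain ⟨j, hvj⟩ := exists_subset_pairBlock hι hk (by omega) hS
  obtain rfl : v = pairBlock ι U j := eq_of_subset_of_card_le hvj (hv ▸ card_pairBlock_le)
  obtain ⟨D, hDU, hD⟩ := exists_subset_card_eq (show k - 2 ≤ U.card by omega)
  have mem_t : ∀ ε, (j, ε) ∈ t := by
    intro ε
    have hεD : ι (j, ε) ∉ D := fun h => hU _ (hDU h)
    obtain ⟨p, hpt, hp⟩ := hcov (insert (ι (j, ε)) D)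
      (insert_subset (apply_mem_pairBlock ε) (hDU.trans subset_union_left))
      (by rw [card_insert_of_notMem hεD, hD]; omega)
    rwa [← eq_of_insert_mem_pairBlockSide hι hU hDU hp]
  exact ⟨j, mem_t 0, mem_t 1⟩

theorem isInstanceOf_deltaIP_pairBlock (hι : ι.Injective) (hU : ∀ p, ι p ∉ U)
    (hUn : U.card + 3 = n) (hk : 2 ≤ k) (hkn : k < n) {m : ℕ}
    (hm : max ((U.card + 1).choose (k - 1)) ((U.card + 1).choose (k - 2)) ≤ m) :
    IsInstanceOf deltaIP (patternPow (deltaNK n k (pairBlockHypergraph ι U k)) m) := by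
  let f : ℕ × Fin 2 → {u : Finset {u : Finset I // u.card = k - 1} // u.card ≤ m} := fun p =>
    ⟨(pairBlockSide ι U k p.1 p.2).subtype (·.card = k - 1),
      (card_subtype _ _).trans_le <| (card_filter_le _ _).trans <|
        (card_pairBlockSide_le hk _).trans hm⟩
  refine fun _ => ⟨f, fun t _ => ?_⟩
  have mem_sup_image : ∀ [DecidableEq {u : Finset I // u.card = k - 1}]
      [DecidableEq {u : Finset {u : Finset I // u.card = k - 1} // u.card ≤ m}]
      (u : Finset I) (hu : u.card = k - 1), ⟨u, hu⟩ ∈ (t.image f).sup (·.1) ↔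
      ∃ p ∈ t, u ∈ pairBlockSide ι U k p.1 p.2 := by
    simp [f, mem_sup, mem_subtype]
  simp only [patternPow, deltaNK, deltaIP, Set.mem_ofPred_eq, mem_sup_image]
  rw [← not_exists]
  refine not_congr ⟨?_, ?_⟩
  · rintro ⟨j, hj0, hj1⟩
    refine ⟨pairBlock ι U j, by rw [card_pairBlock hι hU]; omega, fun u hu huj => ?_,
      fun w hw hwk => ⟨j, hw, hwk⟩⟩
    by_cases h : ι (j, 1) ∈ u
    · exact ⟨_, hj1, by simp [pairBlockSide, huj, hu, h]⟩
    · exact ⟨_, hj0, by simp [pairBlockSide, huj, hu, h]⟩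
  · rintro ⟨v, hv, hcov, hS⟩
    exact exists_pair_mem_of_forall_mem_pairBlockSide hι hU hk (by omega) (by omega)
      (fun u huv hu => hcov u hu huv) hS

end PairBlocks

theorem card_univ_image_inr (α : Type*) [DecidableEq α] (m : ℕ) :
    ((univ : Finset (Fin m)).image (Sum.inr : Fin m → α ⊕ Fin m)).card = m := by
  rw [card_image_of_injective _ Sum.inr_injective, card_univ, Fintype.card_fin]

theorem statement8 (k : ℕ) (h2 : 2 ≤ k) :
    (∀ w ∈ ipHyper k, w.card = k) ∧
    CliqueFreeSet (k + 1) k (ipHyper k) ∧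
    IsInstanceOf deltaIP (patternPow (deltaNK (k + 1) k (ipHyper k)) (k - 1)) ∧
    ∀ n : ℕ, k < n →
      ∃ (I : Type) (S : Set (Finset I)) (istar : ℕ),
        (∀ v ∈ S, v.card = k) ∧ CliqueFreeSet n k S ∧
        IsInstanceOf deltaIP (patternPow (deltaNK n k S) istar) := by
  have hU : ∀ {m : ℕ} (p : ℕ × Fin 2), Sum.inl p ∉ (univ : Finset (Fin m)).image Sum.inr := by
    simp
  have hUk := card_univ_image_inr (ℕ × Fin 2) (k - 2)
  have hS : ipHyper k = pairBlockHypergraph Sum.inl (univ.image Sum.inr) k := by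
    have hrange := pairBlockHypergraph_eq_range Sum.inl_injective (hU (m := k - 2))
    rw [hUk, show k - 2 + 2 = k by omega] at hrange
    rw [hrange]
    ext w
    simp [ipHyper, pairBlock, eq_comm]
  refine ⟨?_, ?_, ?_, fun n hkn => ?_⟩
  · rintro w ⟨j, rfl⟩
    rw [← pairBlock, card_pairBlock Sum.inl_injective hU]
    omega
  · rw [hS]
    exact cliqueFreeSet_pairBlockHypergraph Sum.inl_injective (by omega) h2 (by omega)
  · rw [hS]
    refine isInstanceOf_deltaIP_pairBlock Sum.inl_injective hU (by omega) h2 (by omega) ?_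
    rw [hUk, show k - 1 = k - 2 + 1 by omega, Nat.choose_self, Nat.choose_succ_self_right]
    omega
  · have hUn := card_univ_image_inr (ℕ × Fin 2) (n - 3)
    exact ⟨_, pairBlockHypergraph Sum.inl (univ.image Sum.inr) k, _,
      fun _ => card_of_mem_pairBlockHypergraph,
      cliqueFreeSet_pairBlockHypergraph Sum.inl_injective (by omega) h2 hkn.le,
      isInstanceOf_deltaIP_pairBlock Sum.inl_injective hU (by omega) h2 hkn le_rfl⟩
end

section
/- Let B be a complete Boolean algebra, write λ = c.c.(B), and let U be an ℵ₁-incomplete ultrafilter on B. Then there is a (λ, Δ(FDP))-distribution A in U such that whenever e : B → B* is a complete embedding of B into a complete Boolean algebra B* that has the λ-c.c. (every antichain of B* has cardinality < λ), the λ-distribution s ↦ e(A(s)) has no multiplicative refinement in B*: there is no multiplicative λ-distribution D in B* with D(s) ≤ e(A(s)) for all finite s ⊆ λ. -/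
universe u v

section BA

variable {B : Type u} [CompleteBooleanAlgebra B]

/-- U is an ultrafilter on the complete Boolean algebra B. -/
def IsUltra (U : Set B) : Prop :=
  ⊤ ∈ U ∧ ⊥ ∉ U ∧ (∀ a ∈ U, ∀ b : B, a ≤ b → b ∈ U) ∧
    (∀ a ∈ U, ∀ b ∈ U, a ⊓ b ∈ U) ∧ ∀ a : B, a ∈ U ∨ aᶜ ∈ U

/-- c decides b if c ≤ b or c ≤ bᶜ. -/
def Decides (c b : B) : Prop := c ≤ b ∨ c ≤ bᶜ

/-- A λ-distribution (with index set ι of cardinality λ): a map from finite subsets of λ to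
the nonzero elements of B, sending ∅ to ⊤ and reversing inclusions. -/
def IsDistribution {ι : Type*} (A : Finset ι → B) : Prop :=
  (∀ s, A s ≠ ⊥) ∧ A ∅ = ⊤ ∧ ∀ s t : Finset ι, t ⊆ s → A s ≤ A t

/-- A distribution is multiplicative if A(s) = ⨅_{α∈s} A({α}). -/
def IsMultiplicative {ι : Type*} (A : Finset ι → B) : Prop :=
  ∀ s : Finset ι, A s = s.inf (fun α => A {α})

/-- A family (a_α)_{α<λ} is λ-regular: finite subfamilies have nonzero meet, infinite
subfamilies have meet ⊥, and the nonzero elements deciding every a_α are dense in B₊. -/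
def IsRegularFamily {ι : Type*} (a : ι → B) : Prop :=
  (∀ s : Finset ι, s.inf a ≠ ⊥) ∧
  (∀ X : Set ι, X.Infinite → (⨅ α ∈ X, a α) = ⊥) ∧
  (∀ b : B, b ≠ ⊥ → ∃ c : B, c ≠ ⊥ ∧ c ≤ b ∧ ∀ α : ι, Decides c (a α))

/-- A name for a natural number: a map n : ω → B with pairwise disjoint values
whose supremum is ⊤. -/
def IsName (nm : ℕ → B) : Prop :=
  (∀ i j : ℕ, i ≠ j → Disjoint (nm i) (nm j)) ∧ (⨆ m : ℕ, nm m) = ⊤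

/-- ‖n ≥ m‖ := ⨆_{j≥m} n(j). -/
def nameGe (nm : ℕ → B) (m : ℕ) : B := ⨆ j : ℕ, ⨆ _ : m ≤ j, nm j

/-- n is U-nonstandard if ‖n ≥ m‖ ∈ U for every m. -/
def IsNonstandardName (U : Set B) (nm : ℕ → B) : Prop := ∀ m : ℕ, nameGe nm m ∈ U

/-- U is ℵ₁-incomplete: some decreasing ω-sequence from U has infimum ⊥. -/
def Aleph1Incomplete (U : Set B) : Prop :=
  ∃ c : ℕ → B, (∀ k, c k ∈ U) ∧ Antitone c ∧ (⨅ k : ℕ, c k) = ⊥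


/-- An antichain in B: a set of pairwise-disjoint nonzero elements. -/
def IsAntichainIn {B : Type*} [CompleteBooleanAlgebra B] (A : Set B) : Prop :=
  (∀ a ∈ A, a ≠ ⊥) ∧ A.Pairwise (fun a b => a ⊓ b = ⊥)

/-- c.c.(B): the least cardinal κ such that B has no antichain of cardinality κ. -/
noncomputable def ccOf (B : Type u) [CompleteBooleanAlgebra B] : Cardinal.{u} :=
  sInf {κ : Cardinal.{u} | ¬ ∃ A : Set B, IsAntichainIn A ∧ Cardinal.mk A = κ}

/-- A is a (λ, Δ)-distribution: for every finite s ⊆ λ and nonzero c deciding A(t) for all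
t ⊆ s, there is f : s → I with, for all t ⊆ s, c ≤ A(t) iff f[t] ∈ Δ. -/
def IsDeltaDistribution {B : Type*} [CompleteBooleanAlgebra B] {ι : Type*} {I : Type*}
    (A : Finset ι → B) (Δ : Set (Finset I)) : Prop :=
  ∀ (s : Finset ι) (c : B), c ≠ ⊥ → (∀ t ⊆ s, Decides c (A t)) →
    ∃ f : ι → I, ∀ t ⊆ s, (c ≤ A t ↔ (letI := Classical.decEq I; t.image f) ∈ Δ)

/-- A complete embedding of complete Boolean algebras: an injective homomorphism preserving
arbitrary suprema and infima. -/
def IsCompleteEmbedding {B : Type*} {B' : Type*} [CompleteBooleanAlgebra B]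
    [CompleteBooleanAlgebra B'] (e : B → B') : Prop :=
  Function.Injective e ∧ (∀ a b : B, e (a ⊓ b) = e a ⊓ e b) ∧
    (∀ a b : B, e (a ⊔ b) = e a ⊔ e b) ∧ (∀ a : B, e aᶜ = (e a)ᶜ) ∧
    (∀ S : Set B, e (sSup S) = sSup (e '' S)) ∧ (∀ S : Set B, e (sInf S) = sInf (e '' S))

/-- The pattern Δ(FDP) on (ω∖{0}) × ω: finite sets s such that for some m ≥ 1,
s ⊆ {m} × ω and |s| ≤ m. -/
def deltaFDP : Set (Finset ({m : ℕ // 0 < m} × ℕ)) :=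
  {s | ∃ m : {m : ℕ // 0 < m}, (∀ p ∈ s, p.1 = m) ∧ s.card ≤ (m : ℕ)}

/-!
Fix a decreasing sequence `⊤ = d 0 = d 1 ≥ d 2 ≥ ⋯` in `U` with meet `⊥` and put `A s = d |s|`.
Below a condition `c`, `A` restricted to the subsets of `s` only says "at most `k` elements",
where `k` is the last index with `c ≤ d k`; this is row `k` of `Δ(FDP)`.

Suppose `D` is a multiplicative refinement of `e ∘ A`. The levels `e (d m \ d (m + 1))`
partition `B'`, and `D t` misses level `m` once `|t| > m`. So every `α` lies in a maximal finite
`u_α` whose `D`-value meets a level `m_α` that `D {α}` meets. Multiplicativity makes the elements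
`D u_α ⊓ level m_α` pairwise equal or disjoint, hence an antichain, and each of them comes from
at most `|u_α|` indices `α`. Thus `λ ≤ (size of an antichain) · ℵ₀ < λ`; infinitely many nonzero
levels make `λ` uncountable.
-/

open Cardinal Function

section Levels

variable {β : Type*} [CompleteBooleanAlgebra β] {x : ℕ → β}

def level (x : ℕ → β) (m : ℕ) : β := x m \ x (m + 1)

theorem disjoint_level_of_lt (hx : Antitone x) {m k : ℕ} (h : m < k) :
    Disjoint (level x m) (x k) :=
  disjoint_sdiff_self_left.mono_right (hx h)

theorem pairwise_disjoint_level (hx : Antitone x) : Pairwise (Disjoint on (level x)) :=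
  (pairwise_disjoint_on _).2 fun _ _ h => (disjoint_level_of_lt hx h).mono_right sdiff_le

theorem iSup_level (hx0 : x 0 = ⊤) (hxinf : ⨅ k, x k = ⊥) : ⨆ m, level x m = ⊤ := by
  set y := (⨆ m, level x m)ᶜ
  have hy : ∀ k, y ≤ x k := by
    intro k
    induction k with
    | zero => simp [hx0]
    | succ k ih =>
      have hdisj : Disjoint y (level x k) := disjoint_compl_left.mono_right (le_iSup _ k)
      exact sdiff_eq_bot_iff.1 (le_bot_iff.1 (hdisj sdiff_le (sdiff_le_sdiff_right ih)))
  rw [← compl_eq_bot, ← le_bot_iff, ← hxinf]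
  exact le_iInf hy

theorem infinite_setOf_level_ne_bot (hx : Antitone x) (hx0 : x 0 = ⊤) (hxne : ∀ k, x k ≠ ⊥)
    (hxinf : ⨅ k, x k = ⊥) : {m | level x m ≠ ⊥}.Infinite := by
  intro hfin
  obtain ⟨N, hN⟩ := hfin.bddAbove
  have hdisj : Disjoint (x (N + 1)) (⨆ m, level x m) := by
    refine disjoint_iSup_iff.2 fun m => ?_
    by_cases hm : m ≤ N
    · exact (disjoint_level_of_lt hx (Nat.lt_succ_of_le hm)).symm
    · rw [not_not.1 fun h => hm (hN h)]
      exact disjoint_bot_right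
  rw [iSup_level hx0 hxinf, disjoint_top] at hdisj
  exact hxne (N + 1) hdisj

end Levels

section Antichains

variable {β : Type*} [CompleteBooleanAlgebra β]

theorem isAntichainIn_image_of_pairwise_disjoint {κ : Type*} {w : κ → β}
    (hw : Pairwise (Disjoint on w)) : IsAntichainIn (w '' {m | w m ≠ ⊥}) := by
  refine ⟨fun _ ⟨m, hm, hmw⟩ => hmw ▸ hm, ?_⟩
  rintro _ ⟨m, -, rfl⟩ _ ⟨n, -, rfl⟩ hmn
  exact disjoint_iff.1 (hw fun h => hmn (congrArg w h))

theorem injOn_setOf_ne_bot_of_pairwise_disjoint {κ : Type*} {w : κ → β}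
    (hw : Pairwise (Disjoint on w)) : Set.InjOn w {m | w m ≠ ⊥} := by
  intro m hm n _ hmn
  by_contra h
  have hdisj : Disjoint (w m) (w n) := hw h
  rw [← hmn, disjoint_self] at hdisj
  exact hm hdisj

theorem exists_not_disjoint_of_iSup_eq_top {κ : Type*} {w : κ → β} (hw : ⨆ m, w m = ⊤)
    {b : β} (hb : b ≠ ⊥) : ∃ m, ¬ Disjoint b (w m) := by
  by_contra! h
  rw [← disjoint_iSup_iff, hw, disjoint_top] at h
  exact hb h

end Antichains

theorem exists_maximal_finset_of_card_le {ι : Type*} {P : Finset ι → Prop} {n : ℕ}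
    (hP : ∀ u, P u → u.card ≤ n) {u₀ : Finset ι} (hu₀ : P u₀) :
    ∃ u, P u ∧ ∀ v, u ⊂ v → ¬ P v := by
  classical
  obtain ⟨u, hu, hcard⟩ := Nat.findGreatest_spec (P := fun k => ∃ u, P u ∧ u.card = k)
    (hP u₀ hu₀) ⟨u₀, hu₀, rfl⟩
  refine ⟨u, hu, fun v huv hv => ?_⟩
  have := Nat.le_findGreatest (P := fun k => ∃ u, P u ∧ u.card = k) (hP v hv) ⟨v, hv, rfl⟩
  have := Finset.card_lt_card huv
  omega

section Refinement

variable {ι : Type u} {β : Type v} [CompleteBooleanAlgebra β] {D : Finset ι → β}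

theorem IsMultiplicative.inf_eq_union [DecidableEq ι] (hD : IsMultiplicative D) (s t : Finset ι) :
    D s ⊓ D t = D (s ∪ t) := by
  rw [hD s, hD t, hD (s ∪ t), Finset.inf_union]

theorem IsMultiplicative.eq_of_maximal [DecidableEq ι] (hD : IsMultiplicative D) {c : β}
    {u v : Finset ι}
    (hu : ∀ u', u ⊂ u' → Disjoint (D u') c) (hv : ∀ v', v ⊂ v' → Disjoint (D v') c)
    (huv : ¬ Disjoint (D u ⊓ c) (D v ⊓ c)) : u = v := by
  have hunion : ¬ Disjoint (D (u ∪ v)) c := by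
    rw [← hD.inf_eq_union, disjoint_iff]
    rwa [disjoint_iff, inf_inf_inf_comm, inf_idem] at huv
  have subset_of_maximal : ∀ {u v : Finset ι}, (∀ u', u ⊂ u' → Disjoint (D u') c) →
      ¬ Disjoint (D (u ∪ v)) c → v ⊆ u := fun {u v} hu huv => by
    by_contra h
    exact huv (hu _ (Finset.ssubset_iff_subset_ne.2
      ⟨Finset.subset_union_left, fun h' => h (Finset.union_eq_left.1 h'.symm)⟩))
  exact le_antisymm (subset_of_maximal hv (Finset.union_comm u v ▸ hunion))
    (subset_of_maximal hu hunion)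

theorem exists_antichain_lift_mk_le_mul_aleph0 {w : ℕ → β}
    (hw : Pairwise (Disjoint on w)) (hwtop : ⨆ m, w m = ⊤)
    (hDne : ∀ s, D s ≠ ⊥) (hDmul : IsMultiplicative D)
    (hDw : ∀ m t, m < t.card → Disjoint (D t) (w m)) :
    ∃ R : Set β, IsAntichainIn R ∧ lift.{v} #ι ≤ lift.{u} #R * ℵ₀ := by
  classical
  choose M hM using fun a => exists_not_disjoint_of_iSup_eq_top hwtop (hDne {a})
  -- A set whose `D`-value meets `w (M a)` has at most `M a` elements, so a maximal one exists.
  choose u hu hmax using fun a => exists_maximal_finset_of_card_le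
    (P := fun u => a ∈ u ∧ ¬ Disjoint (D u) (w (M a))) (n := M a)
    (fun u hu => not_lt.1 fun h => hu.2 (hDw _ _ h)) ⟨Finset.mem_singleton_self a, hM a⟩
  have hmax' : ∀ a v, u a ⊂ v → Disjoint (D v) (w (M a)) :=
    fun a v h => not_not.1 fun h' => hmax a v h ⟨h.subset (hu a).1, h'⟩
  set G : ι → β := fun a => D (u a) ⊓ w (M a)
  have hGne : ∀ a, G a ≠ ⊥ := fun a => disjoint_iff.not.1 (hu a).2
  have hG : ∀ a b, ¬ Disjoint (G a) (G b) → u a = u b ∧ M a = M b := by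
    intro a b hab
    have hM : M a = M b := by
      by_contra h
      exact hab ((hw h).mono inf_le_right inf_le_right)
    refine ⟨hDmul.eq_of_maximal ?_ (hmax' b) ?_, hM⟩
    · simpa only [hM] using hmax' a
    · simpa only [G, hM] using hab
  refine ⟨Set.range G, ⟨?_, ?_⟩, ?_⟩
  · rintro _ ⟨a, rfl⟩
    exact hGne a
  · rintro _ ⟨a, rfl⟩ _ ⟨b, rfl⟩ hab
    by_contra h
    obtain ⟨hu, hM⟩ := hG a b (disjoint_iff.not.2 h)
    exact hab (by simp only [G, hu, hM])
  · refine lift_mk_le_lift_mk_mul_of_lift_mk_preimage_le (Set.rangeFactorization G) ?_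
    rintro ⟨_, a, rfl⟩
    refine lift_le_aleph0.2 (le_aleph0_iff_set_countable.2 (Set.Finite.countable
      ((u a).finite_toSet.subset fun b hb => ?_)))
    have hGb : G b = G a := congrArg Subtype.val hb
    have hGab : ¬ Disjoint (G b) (G a) := by rw [hGb, disjoint_self]; exact hGne a
    exact (hG b a hGab).1 ▸ (hu b).1

theorem not_exists_multiplicative_refinement {x : ℕ → β} (hx : Antitone x) (hx0 : x 0 = ⊤)
    (hxne : ∀ k, x k ≠ ⊥) (hxinf : ⨅ k, x k = ⊥)
    (hcc : ∀ R : Set β, IsAntichainIn R → lift.{u} #R < lift.{v} #ι) :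
    ¬ ∃ D : Finset ι → β, IsDistribution D ∧ IsMultiplicative D ∧ ∀ s, D s ≤ x s.card := by
  rintro ⟨D, hD, hDmul, hDx⟩
  have haleph : ℵ₀ < lift.{v} #ι := by
    have hinf := ((infinite_setOf_level_ne_bot hx hx0 hxne hxinf).image
      (injOn_setOf_ne_bot_of_pairwise_disjoint (pairwise_disjoint_level hx))).to_subtype
    exact (aleph0_le_lift.2 (aleph0_le_mk _)).trans_lt
      (hcc _ (isAntichainIn_image_of_pairwise_disjoint (pairwise_disjoint_level hx)))
  obtain ⟨R, hR, hle⟩ := exists_antichain_lift_mk_le_mul_aleph0 (pairwise_disjoint_level hx)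
    (iSup_level hx0 hxinf) hD.1 hDmul
    fun m t h => (disjoint_level_of_lt hx h).symm.mono_left (hDx t)
  exact (hle.trans_lt (mul_lt_of_lt haleph.le (hcc R hR) haleph)).false

end Refinement

namespace IsCompleteEmbedding

variable {β : Type v} [CompleteBooleanAlgebra β] {e : B → β}

theorem map_bot (he : IsCompleteEmbedding e) : e ⊥ = ⊥ := by
  simpa using he.2.2.2.2.1 ∅

theorem map_top (he : IsCompleteEmbedding e) : e ⊤ = ⊤ := by
  simpa using he.2.2.2.2.2 ∅

theorem map_ne_bot (he : IsCompleteEmbedding e) {a : B} (ha : a ≠ ⊥) : e a ≠ ⊥ :=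
  fun h => ha (he.1 (h.trans he.map_bot.symm))

theorem monotone (he : IsCompleteEmbedding e) : Monotone e := fun a b hab => by
  rw [← inf_eq_left.2 hab, he.2.1]
  exact inf_le_right

theorem map_iInf {κ : Type*} (he : IsCompleteEmbedding e) (x : κ → B) :
    e (⨅ k, x k) = ⨅ k, e (x k) := by
  rw [iInf, he.2.2.2.2.2, ← Set.range_comp]
  rfl

end IsCompleteEmbedding

theorem image_mem_deltaFDP_iff {ι : Type*} [DecidableEq ({m : ℕ // 0 < m} × ℕ)]
    {t : Finset ι} {g : ι → ℕ} (hg : Set.InjOn g t) (m : {m : ℕ // 0 < m}) :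
    t.image (fun a => (m, g a)) ∈ deltaFDP ↔ t.card ≤ m := by
  have hcard : (t.image fun a => (m, g a)).card = t.card :=
    Finset.card_image_of_injOn fun a ha b hb hab => hg ha hb (congrArg Prod.snd hab)
  refine ⟨fun ⟨m', hrow, hle⟩ => ?_, fun h => ⟨m, by simp, hcard ▸ h⟩⟩
  obtain rfl | ⟨a, ha⟩ := t.eq_empty_or_nonempty
  · simp
  · obtain rfl : m = m' := hrow _ (Finset.mem_image_of_mem _ ha)
    exact hcard ▸ hle

section CardDistribution

variable {d : ℕ → B}

theorem exists_threshold (hd : Antitone d) (hd1 : d 1 = ⊤) (c : B) (n : ℕ) :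
    ∃ k, 0 < k ∧ ∀ j ≤ n, (c ≤ d j ↔ j ≤ k) := by
  classical
  have hc1 : c ≤ d 1 := hd1 ▸ le_top
  refine ⟨Nat.findGreatest (c ≤ d ·) (max n 1), Nat.le_findGreatest le_sup_right hc1,
    fun j hj => ⟨fun hcj => Nat.le_findGreatest (le_max_of_le_left hj) hcj, fun hjk => ?_⟩⟩
  exact (Nat.findGreatest_spec (P := (c ≤ d ·)) le_sup_right hc1).trans (hd hjk)

theorem isDistribution_card {ι : Type*} (hd : Antitone d) (hd0 : d 0 = ⊤)
    (hdne : ∀ k, d k ≠ ⊥) :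
    IsDistribution fun s : Finset ι => d s.card :=
  ⟨fun _ => hdne _, hd0, fun _ _ hts => hd (Finset.card_le_card hts)⟩

theorem isDeltaDistribution_card {ι : Type*} (hd : Antitone d) (hd1 : d 1 = ⊤) :
    IsDeltaDistribution (fun s : Finset ι => d s.card) deltaFDP := by
  classical
  intro s c _ _
  obtain ⟨k, hk, hthr⟩ := exists_threshold hd hd1 c s.card
  refine ⟨fun a => (⟨k, hk⟩, s.toList.idxOf a), fun t hts => ?_⟩
  let _ : DecidableEq ({m : ℕ // 0 < m} × ℕ) := Classical.decEq _
  rw [hthr _ (Finset.card_le_card hts), image_mem_deltaFDP_iff]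
  exact fun a ha b _ hab => (List.idxOf_inj (Finset.mem_toList.2 (hts ha))).1 hab

end CardDistribution

-- `Δ(FDP)` contains every singleton, which forces `A {α} = ⊤`: hence the two leading `⊤`s.
def padTop (c : ℕ → B) : ℕ → B
  | 0 => ⊤
  | 1 => ⊤
  | k + 2 => c k

theorem antitone_padTop {c : ℕ → B} (hc : Antitone c) : Antitone (padTop c) := by
  refine antitone_nat_of_succ_le fun k => ?_
  match k with
  | 0 => exact le_rfl
  | 1 => exact le_top
  | k + 2 => exact hc k.le_succ

theorem iInf_padTop (c : ℕ → B) : ⨅ k, padTop c k = ⨅ k, c k :=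
  le_antisymm (le_iInf fun k => iInf_le _ (k + 2)) <| le_iInf fun
    | 0 => le_top
    | 1 => le_top
    | k + 2 => iInf_le _ k

theorem padTop_mem {U : Set B} (hU : ⊤ ∈ U) {c : ℕ → B} (hc : ∀ k, c k ∈ U) :
    ∀ k, padTop c k ∈ U
  | 0 => hU
  | 1 => hU
  | k + 2 => hc k

theorem statement15_general {B : Type u} [CompleteBooleanAlgebra B]
    (U : Set B) (hU : IsUltra U) (hinc : Aleph1Incomplete U)
    (lam : Cardinal.{u})
    (ι : Type u) (hι : Cardinal.mk ι = lam) :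
    ∃ A : Finset ι → B, IsDistribution A ∧ (∀ s, A s ∈ U) ∧
      IsDeltaDistribution A deltaFDP ∧
      ∀ (B' : Type v) [CompleteBooleanAlgebra B'] (e : B → B'),
        IsCompleteEmbedding e →
        (∀ A' : Set B', IsAntichainIn A' →
          Cardinal.lift.{u} (Cardinal.mk A') < Cardinal.lift.{v} lam) →
        ¬ ∃ D : Finset ι → B', IsDistribution D ∧ IsMultiplicative D ∧
            ∀ s : Finset ι, D s ≤ e (A s) := by
  obtain ⟨c, hcU, hc, hcinf⟩ := hinc
  have hd : Antitone (padTop c) := antitone_padTop hc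
  have hdU : ∀ k, padTop c k ∈ U := padTop_mem hU.1 hcU
  have hdne : ∀ k, padTop c k ≠ ⊥ := fun k h => hU.2.1 (h ▸ hdU k)
  refine ⟨fun s => padTop c s.card, isDistribution_card hd rfl hdne, fun s => hdU _,
    isDeltaDistribution_card hd rfl, fun B' _ e he hcc => ?_⟩
  subst hι
  refine not_exists_multiplicative_refinement (he.monotone.comp_antitone hd) he.map_top
    (fun k => he.map_ne_bot (hdne k)) ?_ hcc
  rw [Function.comp_def, ← he.map_iInf, iInf_padTop, hcinf, he.map_bot]

theorem statement15 {B : Type u} [CompleteBooleanAlgebra B]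
    (U : Set B) (hU : IsUltra U) (hinc : Aleph1Incomplete U)
    (lam : Cardinal.{u}) (hlam : lam = ccOf B)
    (ι : Type u) (hι : Cardinal.mk ι = lam) :
    ∃ A : Finset ι → B, IsDistribution A ∧ (∀ s, A s ∈ U) ∧
      IsDeltaDistribution A deltaFDP ∧
      ∀ (B' : Type v) [CompleteBooleanAlgebra B'] (e : B → B'),
        IsCompleteEmbedding e →
        (∀ A' : Set B', IsAntichainIn A' →
          Cardinal.lift.{u} (Cardinal.mk A') < Cardinal.lift.{v} lam) →
        ¬ ∃ D : Finset ι → B', IsDistribution D ∧ IsMultiplicative D ∧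
            ∀ s : Finset ι, D s ≤ e (A s) :=
  statement15_general U hU hinc lam ι hι

end BA
end
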